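/- arXiv:1311.6115 — 4 statements merged into one kernel-verified Lean document; each statement's English description precedes it below -/
import Mathlib

section
/- Let Γ be the monoid of words over a group G, and fix g_0 ∈ G with g_0 ≠ e. Define for words the sets: G_1 of words starting with a letter ≠ e, G_2 ⊆ G_1 of words both starting and ending with a letter ≠ e, and E_1 the set of words starting with e together with the empty word. For t ∈ {1,3,5} let α_t = (g_0, e^t) (the word g_0 followed by t copies of e). Define the product set A ∘ B via the fusion-rule decomposition: for words x = u·t, y = t̄·v one obtains contributions u·v and (when u,v nonempty) u∗v. Then: (i) G_2 ∘ E_1 ∩ E_1 = ∅; (ii) {α_t} ∘ G_1 and {α_s} ∘ G_1 are disjoint for t ≠ s in {1,3,5}; (iii) {α_t} ∘ G_2 ∘ {ᾱ_t} ⊆ G_2 for each t ∈ {1,3,5}. -/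
/-- Involution on words: reverse and invert letters. -/
def wordInv {G : Type*} [Group G] (w : List G) : List G := (w.map (·⁻¹)).reverse

/-- Fusion of two words: multiply the last letter of `u` with the first letter of `v`. -/
def fuse {G : Type*} [Group G] (u v : List G) : List G :=
  match u.getLast?, v with
  | some a, b :: t => u.dropLast ++ (a * b) :: t
  | _, _ => u ++ v

/-- `γ` appears in the fusion-rule expansion of `b_x ⊗ b_y`, i.e. there is a
decomposition `x = u·t`, `y = t̄·v` with `γ = u·v` or (for `u, v` nonempty) `γ = u∗v`. -/
def inProd {G : Type*} [Group G] (x y γ : List G) : Prop :=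
  ∃ u t v : List G, x = u ++ t ∧ y = wordInv t ++ v ∧
    (γ = u ++ v ∨ (u ≠ [] ∧ v ≠ [] ∧ γ = fuse u v))

/-- The product set `A ∘ B` of two sets of words. -/
def circ {G : Type*} [Group G] (A B : Set (List G)) : Set (List G) :=
  {γ | ∃ x ∈ A, ∃ y ∈ B, inProd x y γ}

/-- Words starting with `e`, together with the empty word. -/
def E1 (G : Type*) [Group G] : Set (List G) := {w | w = [] ∨ w.head? = some 1}

/-- Words starting with a letter `≠ e`. -/
def G1 (G : Type*) [Group G] : Set (List G) := {w | ∃ a, w.head? = some a ∧ a ≠ 1}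

/-- Words starting and ending with a letter `≠ e`. -/
def G2 (G : Type*) [Group G] : Set (List G) :=
  {w | (∃ a, w.head? = some a ∧ a ≠ 1) ∧ (∃ b, w.getLast? = some b ∧ b ≠ 1)}

/-- Words starting with `e` that contain at least one letter `≠ e`. -/
def E3 (G : Type*) [Group G] : Set (List G) := {w | w.head? = some 1 ∧ ∃ a ∈ w, a ≠ 1}

/-!
In `x ⊗ y` the overlap `t` can only be nonempty if the last letter of `x` cancels against the
first letter of `y`. In all three parts it does not, so every contribution is `x·y` or `x∗y`, and
since one of the two boundary letters is `e`, the fusion `x∗y` merely deletes it. Hence a word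
of `G₂ ∘ E₁` starts like a word of `G₂`; `{α_t} ∘ {y} ⊆ {g₀ e^k y : k ∈ {t - 1, t}}` for
`y ∈ G₁`, which determines `t` up to one while `1, 3, 5` are two apart; and a word of
`{α_t} ∘ G₂ ∘ {ᾱ_t}` starts with `g₀` and ends with `g₀⁻¹`.
-/

open List

section

variable {G : Type*} [Group G]

lemma fuse_one_cons {x : List G} (hx : x ≠ []) (l : List G) : fuse x (1 :: l) = x ++ l := by
  obtain ⟨x', b, rfl⟩ := (eq_nil_or_concat x).resolve_left hx
  simp [fuse]

lemma fuse_append_one (x : List G) {y : List G} (hy : y ≠ []) : fuse (x ++ [1]) y = x ++ y := by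
  obtain ⟨c, y', rfl⟩ := exists_cons_of_ne_nil hy
  simp [fuse]

lemma inProd.eq_append_or_eq_fuse {x y γ : List G} (h : inProd x y γ)
    (hxy : ∀ b, x.getLast? = some b → y.head? ≠ some b⁻¹) :
    γ = x ++ y ∨ (x ≠ [] ∧ y ≠ [] ∧ γ = fuse x y) := by
  obtain ⟨u, t, v, rfl, rfl, hγ⟩ := h
  rcases eq_nil_or_concat t with rfl | ⟨t', b, rfl⟩
  · simpa [wordInv] using hγ
  · exact absurd (by simp [wordInv]) (hxy b (by simp))

lemma inProd.eq_append_or_eq_append_tail {x y γ : List G} (h : inProd x y γ)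
    (hx : x.getLast? ≠ some 1) (hy : y ∈ E1 G) : γ = x ++ y ∨ γ = x ++ y.tail := by
  have hxy : ∀ b, x.getLast? = some b → y.head? ≠ some b⁻¹ := by
    rintro b hb hyb
    rcases hy with rfl | hy
    · simp at hyb
    · exact hx (by simp_all)
  rcases h.eq_append_or_eq_fuse hxy with hγ | ⟨hx₀, hy₀, rfl⟩
  · exact .inl hγ
  · obtain ⟨c, y', rfl⟩ := exists_cons_of_ne_nil hy₀
    obtain rfl : c = 1 := by simpa [E1] using hy
    exact .inr (fuse_one_cons hx₀ y')

lemma inProd.eq_append_or_eq_of_getLast_one {x y γ : List G} (h : inProd (x ++ [1]) y γ)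
    (hy : y ∈ G1 G) : γ = x ++ 1 :: y ∨ γ = x ++ y := by
  obtain ⟨c, hc, hc₁⟩ := hy
  have hxy : ∀ b, (x ++ [1]).getLast? = some b → y.head? ≠ some b⁻¹ := by
    intro b hb
    obtain rfl : b = 1 := by simpa using hb.symm
    simpa [hc] using hc₁
  rcases h.eq_append_or_eq_fuse hxy with rfl | ⟨-, hy₀, rfl⟩
  · simp
  · exact .inr (fuse_append_one x hy₀)

lemma inProd_cons_replicate_one {g : G} {t : ℕ} (ht : t ≠ 0) {y γ : List G} (hy : y ∈ G1 G)
    (h : inProd (g :: replicate t 1) y γ) :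
    ∃ k, (k = t ∨ k + 1 = t) ∧ γ = g :: (replicate k 1 ++ y) := by
  obtain ⟨n, rfl⟩ := Nat.exists_eq_succ_of_ne_zero ht
  rw [replicate_succ', ← cons_append] at h
  rcases h.eq_append_or_eq_of_getLast_one hy with rfl | rfl
  · exact ⟨n + 1, .inl rfl, by simp [replicate_succ']⟩
  · exact ⟨n, .inr rfl, rfl⟩

lemma eq_of_replicate_one_append_eq {k k' : ℕ} {y y' : List G} (hy : y ∈ G1 G)
    (hy' : y' ∈ G1 G) (h : replicate k 1 ++ y = replicate k' 1 ++ y') : k = k' := by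
  wlog hle : k ≤ k' generalizing k k' y y'
  · exact (this hy' hy h.symm (by omega)).symm
  obtain ⟨d, rfl⟩ := Nat.exists_eq_add_of_le hle
  rw [replicate_add, append_assoc] at h
  cases d with
  | zero => rfl
  | succ d =>
    obtain ⟨c, hc, hc₁⟩ := hy
    rw [append_cancel_left h, replicate_succ, cons_append, head?_cons, Option.some_inj] at hc
    exact absurd hc.symm hc₁

lemma wordInv_cons_replicate_one (g : G) (t : ℕ) :
    wordInv (g :: replicate t 1) = replicate t 1 ++ [g⁻¹] := by
  simp [wordInv]

lemma append_mem_G1 {x : List G} (hx : x ∈ G1 G) (y : List G) : x ++ y ∈ G1 G := by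
  obtain ⟨a, ha, ha₁⟩ := hx
  exact ⟨a, by simp [head?_append, ha], ha₁⟩

lemma append_mem_G2 {x y : List G} (hx : x ∈ G1 G) (hy : ∃ b, y.getLast? = some b ∧ b ≠ 1) :
    x ++ y ∈ G2 G := by
  obtain ⟨b, hb, hb₁⟩ := hy
  exact ⟨append_mem_G1 hx y, b, by simp [getLast?_append, hb], hb₁⟩

lemma getLast?_ne_some_one_of_mem_G2 {x : List G} (hx : x ∈ G2 G) : x.getLast? ≠ some 1 := by
  obtain ⟨-, b, hb, hb₁⟩ := hx
  simpa [hb] using hb₁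

lemma notMem_E1_of_mem_G1 {x : List G} (hx : x ∈ G1 G) : x ∉ E1 G := by
  obtain ⟨a, ha, ha₁⟩ := hx
  rintro (rfl | h)
  · simp at ha
  · exact ha₁ (by simpa [ha] using h)

end

/-- Proposition 3.3 (1),(2): with `α_t = (g_0, e^t)` for `t ∈ {1,3,5}`:
(i) `G_2 ∘ E_1 ∩ E_1 = ∅`; (ii) the sets `{α_t} ∘ G_1`, `t ∈ {1,3,5}`, are pairwise
disjoint; (iii) `{α_t} ∘ G_2 ∘ {ᾱ_t} ⊆ G_2` for each `t ∈ {1,3,5}`. -/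
theorem fusion_sets_disjointness (G : Type*) [Group G] (g₀ : G) (hg₀ : g₀ ≠ 1) :
    circ (G2 G) (E1 G) ∩ E1 G = ∅ ∧
    (∀ t ∈ ({1, 3, 5} : Set ℕ), ∀ s ∈ ({1, 3, 5} : Set ℕ), t ≠ s →
      circ {g₀ :: List.replicate t (1 : G)} (G1 G) ∩
        circ {g₀ :: List.replicate s (1 : G)} (G1 G) = ∅) ∧
    (∀ t ∈ ({1, 3, 5} : Set ℕ),
      circ (circ {g₀ :: List.replicate t (1 : G)} (G2 G))
        {wordInv (g₀ :: List.replicate t (1 : G))} ⊆ G2 G) := by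
  refine ⟨?_, ?_, ?_⟩
  · refine Set.eq_empty_iff_forall_notMem.2 ?_
    rintro γ ⟨⟨x, hx, y, hy, h⟩, hγ⟩
    rcases h.eq_append_or_eq_append_tail (getLast?_ne_some_one_of_mem_G2 hx) hy with rfl | rfl <;>
      exact notMem_E1_of_mem_G1 (append_mem_G1 hx.1 _) hγ
  · rintro t ht s hs hts
    refine Set.eq_empty_iff_forall_notMem.2 ?_
    rintro γ ⟨⟨_, rfl, y, hy, h⟩, ⟨_, rfl, y', hy', h'⟩⟩
    simp only [Set.mem_insert_iff, Set.mem_singleton_iff] at ht hs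
    obtain ⟨k, hk, rfl⟩ := inProd_cons_replicate_one (by omega) hy h
    obtain ⟨k', hk', hγ⟩ := inProd_cons_replicate_one (by omega) hy' h'
    have := eq_of_replicate_one_append_eq hy hy' (cons.inj hγ).2
    omega
  · rintro t ht γ ⟨γ₁, ⟨_, rfl, z, ⟨hz, hz'⟩, h₁⟩, _, rfl, h⟩
    obtain ⟨n, rfl⟩ : ∃ n, t = n + 1 := ⟨t - 1, by simp at ht; omega⟩
    obtain ⟨k, -, rfl⟩ := inProd_cons_replicate_one n.succ_ne_zero hz h₁
    have hγ₁ : g₀ :: (replicate k 1 ++ z) ∈ G2 G :=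
      append_mem_G2 (x := g₀ :: replicate k 1) ⟨g₀, rfl, hg₀⟩ hz'
    rw [wordInv_cons_replicate_one] at h
    have hg₀' : g₀⁻¹ ≠ 1 := inv_ne_one.2 hg₀
    rcases h.eq_append_or_eq_append_tail (getLast?_ne_some_one_of_mem_G2 hγ₁) (.inr rfl)
      with rfl | rfl
    · exact append_mem_G2 hγ₁.1 ⟨g₀⁻¹, getLast?_concat, hg₀'⟩
    · exact append_mem_G2 hγ₁.1 ⟨g₀⁻¹, getLast?_concat (l := replicate n 1), hg₀'⟩
end

section
/- With notation as above (G a group, e identity, words over G, fusion product sets A ∘ B), let E_3 be the set of words starting with e that contain at least one letter different from e, and let g ∈ G, g ≠ e. Then {(g)} ∘ E_3 ∘ {(g^{-1})} ⊆ G_1, where G_1 is the set of words starting with a letter ≠ e. -/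
/-! The left factor `(g)` cannot be cancelled against a word of `E_3`, which would have to
start with `g⁻¹ ≠ e`; so `(g) ∘ y` is `g·y` or `g∗y = g·tail y`, a word of length at least two
starting with `g`. The single letter `(g⁻¹)` on the right is too short to reach that first letter. -/

section

variable {G : Type*} [Group G]

lemma length_wordInv (w : List G) : (wordInv w).length = w.length := by
  simp [wordInv]

lemma head?_fuse_cons (a : G) {u : List G} (hu : u ≠ []) (v : List G) :
    (fuse (a :: u) v).head? = some a := by
  cases v with
  | nil => simp [fuse]
  | cons b t =>
    simp [fuse, List.getLast?_eq_some_getLast (List.cons_ne_nil a u),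
      List.dropLast_cons_of_ne_nil hu]

/-- When `y` is shorter than `x`, the cancelled part `t` cannot exhaust `x`, and a fusion
(which needs `v ≠ []`) leaves at least two letters of `x` in front. -/
lemma head?_of_inProd_of_length_lt {x y γ : List G} (hxy : y.length < x.length)
    (h : inProd x y γ) : γ.head? = x.head? := by
  obtain ⟨u, t, v, rfl, rfl, hγ⟩ := h
  simp only [List.length_append, length_wordInv] at hxy
  obtain ⟨a, u, rfl⟩ := List.exists_cons_of_ne_nil (List.ne_nil_of_length_pos (by omega) : u ≠ [])
  rcases hγ with rfl | ⟨-, hv, rfl⟩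
  · simp
  · have hu : u ≠ [] := by
      rintro rfl
      have := List.length_pos_iff.mpr hv
      simp only [List.length_singleton] at hxy
      omega
    simp [head?_fuse_cons a hu]

lemma inProd_singleton_left_of_head?_eq_one {a : G} (ha : a ≠ 1) {y γ : List G}
    (hy : y.head? = some 1) (h : inProd [a] y γ) : γ = a :: y ∨ γ = a :: y.tail := by
  obtain ⟨u, t, v, hx, rfl, hγ⟩ := h
  rcases List.append_eq_singleton_iff.mp hx.symm with ⟨rfl, rfl⟩ | ⟨rfl, rfl⟩
  · exact (ha (by simpa [wordInv] using hy)).elim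
  · obtain ⟨v, rfl⟩ := List.head?_eq_some_iff.mp (by simpa [wordInv] using hy)
    rcases hγ with rfl | ⟨-, -, rfl⟩
    · simp [wordInv]
    · simp [wordInv, fuse]

lemma two_le_length_of_mem_E3 {w : List G} (hw : w ∈ E3 G) : 2 ≤ w.length := by
  obtain ⟨hhead, a, ha, ha1⟩ := hw
  obtain ⟨w, rfl⟩ := List.head?_eq_some_iff.mp hhead
  cases w with
  | nil => simp_all
  | cons => simp

end

/-- Lemma 3.8 (1): for `g ≠ e`, `{(g)} ∘ E_3 ∘ {(g⁻¹)} ⊆ G_1`. -/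
theorem conj_E3_subset_G1 (G : Type*) [Group G] (g : G) (hg : g ≠ 1) :
    circ (circ {[g]} (E3 G)) {[g⁻¹]} ⊆ G1 G := by
  rintro δ ⟨γ, ⟨_, rfl, y, hy, hγ⟩, _, rfl, hδ⟩
  have hy1 := two_le_length_of_mem_E3 hy
  have hγ_shape := inProd_singleton_left_of_head?_eq_one hg hy.1 hγ
  have hγ_len : 1 < γ.length := by
    rcases hγ_shape with rfl | rfl <;> simp <;> omega
  refine ⟨g, ?_, hg⟩
  rw [head?_of_inProd_of_length_lt (by simpa using hγ_len) hδ]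
  rcases hγ_shape with rfl | rfl <;> rfl
end

section
/- With the fusion product sets on words over a group G with identity e: for i ∈ {2,4}, {e^i} ∘ G_1 ∘ {e^i} ⊆ E_3, and moreover ({e^2} ∘ G_1 ∘ {e^2}) ∩ ({e^4} ∘ G_1 ∘ {e^4}) = ∅, where e^i is the word of i copies of e, G_1 the set of words starting with a letter ≠ e, and E_3 the set of words starting with e and containing a letter ≠ e. -/
open List

section
variable {G : Type*} [Group G]

theorem wordInv_eq_replicate_one_iff {t : List G} {n : ℕ} :
    wordInv t = replicate n 1 ↔ t = replicate n 1 := by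
  rw [wordInv, reverse_eq_iff, reverse_replicate, eq_replicate_iff, eq_replicate_iff, length_map,
    forall_mem_map]
  simp only [inv_eq_one]

theorem fuse_concat (u : List G) (c b : G) (r : List G) :
    fuse (u ++ [c]) (b :: r) = u ++ (c * b) :: r := by
  simp [fuse]

theorem fuse_one_cons_s11 {u : List G} (hu : u ≠ []) (r : List G) :
    fuse u ((1 : G) :: r) = u ++ r := by
  obtain ⟨u, c, rfl⟩ := (eq_nil_or_concat u).resolve_left hu
  simp [fuse_concat]

def HasLeadingOnes (m : ℕ) (w : List G) : Prop :=
  ∃ a w', a ≠ 1 ∧ w = replicate m 1 ++ a :: w'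

namespace HasLeadingOnes

variable {m n : ℕ} {w : List G}

theorem zero_iff : HasLeadingOnes 0 w ↔ w ∈ G1 G := by
  constructor
  · rintro ⟨a, w', ha, rfl⟩
    exact ⟨a, rfl, ha⟩
  · rintro ⟨a, h, ha⟩
    obtain ⟨w', rfl⟩ := List.head?_eq_some_iff.1 h
    exact ⟨a, w', ha, rfl⟩

theorem getElem?_of_lt (h : HasLeadingOnes m w) {k : ℕ} (hk : k < m) : w[k]? = some 1 := by
  obtain ⟨a, w', -, rfl⟩ := h
  rw [getElem?_append_left (by simpa using hk)]
  simp [hk]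

theorem getElem?_ne (h : HasLeadingOnes m w) : w[m]? ≠ some 1 := by
  obtain ⟨a, w', ha, rfl⟩ := h
  simpa [getElem?_append_right] using ha

theorem unique (hm : HasLeadingOnes m w) (hn : HasLeadingOnes n w) : m = n := by
  by_contra hne
  rcases Nat.lt_or_gt_of_ne hne with hlt | hlt
  · exact hm.getElem?_ne (hn.getElem?_of_lt hlt)
  · exact hn.getElem?_ne (hm.getElem?_of_lt hlt)

theorem replicate_append (h : HasLeadingOnes n w) (m : ℕ) :
    HasLeadingOnes (m + n) (replicate m 1 ++ w) := by
  obtain ⟨a, w', ha, rfl⟩ := h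
  exact ⟨a, w', ha, by rw [replicate_add, append_assoc]⟩

theorem append (h : HasLeadingOnes m w) (v : List G) : HasLeadingOnes m (w ++ v) := by
  obtain ⟨a, w', ha, rfl⟩ := h
  exact ⟨a, w' ++ v, ha, by simp⟩

theorem of_append_replicate {j : ℕ} (h : HasLeadingOnes m (w ++ replicate j 1)) :
    HasLeadingOnes m w := by
  obtain ⟨a, w', ha, hw⟩ := h
  rw [← singleton_append, ← append_assoc, eq_comm, append_eq_append_iff] at hw
  rcases hw with ⟨s, rfl, -⟩ | ⟨s, hs, hj⟩
  · exact ⟨a, s, ha, by simp⟩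
  · rcases eq_or_ne s [] with rfl | hne
    · exact ⟨a, [], ha, by simpa using hs.symm⟩
    -- the last letter `a` would lie in the trailing block of ones
    have : s.getLast? = some a := by
      rw [← getLast?_append_of_ne_nil w hne, ← hs]; simp
    exact absurd (eq_of_mem_replicate (hj ▸ mem_append_left _ (mem_of_getLast? this))) ha

theorem mem_E3 (h : HasLeadingOnes m w) (hm : 0 < m) : w ∈ E3 G := by
  obtain ⟨a, w', ha, rfl⟩ := h
  obtain ⟨m, rfl⟩ := Nat.exists_eq_add_of_lt hm
  exact ⟨by simp [replicate_succ], a, by simp, ha⟩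

end HasLeadingOnes

theorem inProd_replicate_one_left {i : ℕ} {y γ : List G} (hy : y ∈ G1 G)
    (h : inProd (replicate i 1) y γ) : ∃ m, (m = i ∨ m + 1 = i) ∧ γ = replicate m 1 ++ y := by
  obtain ⟨a, hya, ha⟩ := hy
  obtain ⟨r, rfl⟩ := head?_eq_some_iff.1 hya
  obtain ⟨u, t, v, hx, hy, hγ⟩ := h
  obtain ⟨hlen, hu, ht⟩ := append_eq_replicate_iff.1 hx.symm
  rw [← wordInv_eq_replicate_one_iff] at ht
  -- `y` starts with `a ≠ e`, so it cannot begin with the inverted overlap `t̄ = e^|t|`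
  obtain rfl : t = [] := by
    rcases t with _ | ⟨b, t⟩
    · rfl
    · rw [ht, length_cons, replicate_succ] at hy
      exact absurd (cons_eq_cons.1 hy).1 ha
  simp only [wordInv, map_nil, reverse_nil, nil_append, length_nil, add_zero] at hy hlen
  subst hy hlen
  rcases hγ with rfl | ⟨hu0, -, rfl⟩
  · exact ⟨_, Or.inl rfl, by rw [← hu]⟩
  · obtain ⟨i, hi⟩ := Nat.exists_eq_succ_of_ne_zero (n := u.length) (by simpa using hu0)
    refine ⟨i, Or.inr hi.symm, ?_⟩
    rw [hu, hi, replicate_succ', fuse_concat, one_mul]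

theorem inProd_replicate_one_right {k : ℕ} {x γ : List G} (h : inProd x (replicate k 1) γ) :
    ∃ u j l, x = u ++ replicate j 1 ∧ γ = u ++ replicate l 1 := by
  obtain ⟨u, t, v, rfl, hy, hγ⟩ := h
  obtain ⟨-, ht, hv⟩ := append_eq_replicate_iff.1 hy.symm
  rw [wordInv_eq_replicate_one_iff] at ht
  rcases hγ with rfl | ⟨hu, hv0, rfl⟩
  · exact ⟨u, _, _, by rw [← ht], by rw [← hv]⟩
  · obtain ⟨l, hl⟩ := Nat.exists_eq_succ_of_ne_zero (n := v.length) (by simpa using hv0)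
    refine ⟨u, _, l, by rw [← ht], ?_⟩
    rw [hv, hl, replicate_succ, fuse_one_cons_s11 hu]

theorem hasLeadingOnes_of_mem_circ_replicate {i : ℕ} {γ : List G}
    (h : γ ∈ circ (circ {replicate i 1} (G1 G)) {replicate i 1}) :
    ∃ m, (m = i ∨ m + 1 = i) ∧ HasLeadingOnes m γ := by
  obtain ⟨x, ⟨_, rfl, y, hy, hx⟩, _, rfl, hγ⟩ := h
  obtain ⟨m, hm, rfl⟩ := inProd_replicate_one_left hy hx
  obtain ⟨u, j, l, hu, rfl⟩ := inProd_replicate_one_right hγ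
  have hx : HasLeadingOnes m (u ++ replicate j 1) :=
    hu ▸ by simpa using (HasLeadingOnes.zero_iff.2 hy).replicate_append m
  exact ⟨m, hm, hx.of_append_replicate.append _⟩

end

/-- Lemma 3.8 (2),(3): for `i ∈ {2,4}`, `{e^i} ∘ G_1 ∘ {e^i} ⊆ E_3`, and
`({e^2} ∘ G_1 ∘ {e^2}) ∩ ({e^4} ∘ G_1 ∘ {e^4}) = ∅`. -/
theorem conj_G1_by_eWords (G : Type*) [Group G] :
    (∀ i ∈ ({2, 4} : Set ℕ),
      circ (circ {List.replicate i (1 : G)} (G1 G)) {List.replicate i (1 : G)} ⊆ E3 G) ∧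
    circ (circ {List.replicate 2 (1 : G)} (G1 G)) {List.replicate 2 (1 : G)} ∩
      circ (circ {List.replicate 4 (1 : G)} (G1 G)) {List.replicate 4 (1 : G)} = ∅ := by
  refine ⟨fun i hi γ hγ => ?_, Set.eq_empty_of_forall_notMem fun γ ⟨h2, h4⟩ => ?_⟩
  · obtain ⟨m, hm, hγm⟩ := hasLeadingOnes_of_mem_circ_replicate hγ
    exact hγm.mem_E3 (by rcases hi with rfl | rfl <;> omega)
  · obtain ⟨m, hm, hγm⟩ := hasLeadingOnes_of_mem_circ_replicate h2
    obtain ⟨n, hn, hγn⟩ := hasLeadingOnes_of_mem_circ_replicate h4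
    have := hγm.unique hγn
    omega
end

section
/- Let NC(k,l) denote non-crossing partitions of k upper and l lower points, and for p ∈ NC(k,l) let T_p : (ℂ^N)^{⊗k} → (ℂ^N)^{⊗l} be the linear map T_p(e_{i_1} ⊗ ⋯ ⊗ e_{i_k}) = Σ_{j_1,…,j_l} δ_p(i,j) e_{j_1} ⊗ ⋯ ⊗ e_{j_l}, where δ_p(i,j) = 1 if all strings of p join equal indices and 0 otherwise. Then for non-crossing partitions p, q: (i) T_{p ⊗ q} = T_p ⊗ T_q for the horizontal concatenation p ⊗ q; (ii) T_{p^*} = (T_p)^* where p^* is the upside-down reflection; (iii) T_{pq} = N^{−b(p,q)} T_p T_q where pq is the vertical concatenation and b(p,q) the number of closed blocks removed. -/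
open scoped Classical Matrix

noncomputable section

/-- Linear position of the points of a partition diagram with `k` upper points and
`l` lower points (upper points left to right, then lower points right to left,
the standard cyclic order on the boundary of the disc). -/
def ncPos (k l : ℕ) : Fin k ⊕ Fin l → ℕ :=
  Sum.elim (fun i => (i : ℕ)) (fun j => k + (l - 1 - (j : ℕ)))

/-- A partition of `k` upper and `l` lower points (as a setoid) is non-crossing. -/
def NonCrossing (k l : ℕ) (P : Setoid (Fin k ⊕ Fin l)) : Prop :=
  ¬ ∃ a b c d : Fin k ⊕ Fin l,
      ncPos k l a < ncPos k l b ∧ ncPos k l b < ncPos k l c ∧ ncPos k l c < ncPos k l d ∧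
      P.r a c ∧ P.r b d ∧ ¬ P.r a b

variable (N : ℕ)

/-- `δ_p(i,j)`: `1` if the labelling of the points of the diagram by `i` (upper row)
and `j` (lower row) is constant on every block of `p`, and `0` otherwise. -/
def deltaP {k l : ℕ} (p : Setoid (Fin k ⊕ Fin l)) (i : Fin k → Fin N) (j : Fin l → Fin N) : ℂ :=
  if ∀ a b : Fin k ⊕ Fin l, p.r a b → Sum.elim i j a = Sum.elim i j b then 1 else 0

/-- The matrix of the linear map `T_p : (ℂ^N)^{⊗k} → (ℂ^N)^{⊗l}`,
`T_p(e_{i_1} ⊗ ⋯ ⊗ e_{i_k}) = Σ_j δ_p(i,j) e_{j_1} ⊗ ⋯ ⊗ e_{j_l}`, in the standard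
tensor basis (rows indexed by `j`, columns by `i`). -/
def matrixOfP {k l : ℕ} (p : Setoid (Fin k ⊕ Fin l)) :
    Matrix (Fin l → Fin N) (Fin k → Fin N) ℂ :=
  fun j i => deltaP N p i j

/-- The disjoint union of two partitions. -/
def sumSetoid {α β : Type*} (p : Setoid α) (q : Setoid β) : Setoid (α ⊕ β) :=
  Setoid.ker (Sum.map (Quotient.mk p) (Quotient.mk q))

/-- Horizontal concatenation `p ⊗ q` of a partition `p` of `k` upper/`l` lower points
and a partition `q` of `k'` upper/`l'` lower points. -/
def hconcat {k l k' l' : ℕ} (p : Setoid (Fin k ⊕ Fin l)) (q : Setoid (Fin k' ⊕ Fin l')) :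
    Setoid (Fin (k + k') ⊕ Fin (l + l')) :=
  Setoid.comap
    ((Equiv.sumCongr finSumFinEquiv.symm finSumFinEquiv.symm).trans
      (Equiv.sumSumSumComm (Fin k) (Fin k') (Fin l) (Fin l')))
    (sumSetoid p q)

/-- The upside-down reflection `p^*` of a partition: upper and lower rows are exchanged. -/
def reflectP {k l : ℕ} (p : Setoid (Fin k ⊕ Fin l)) : Setoid (Fin l ⊕ Fin k) :=
  Setoid.comap (Sum.swap) p

/-- The partition on upper, middle and lower points generated by `q` (on upper and middle
points) and `p` (on middle and lower points), used to define the vertical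
concatenation `pq`. -/
def middleJoin {k l m : ℕ} (p : Setoid (Fin l ⊕ Fin m)) (q : Setoid (Fin k ⊕ Fin l)) :
    Setoid (Fin k ⊕ Fin l ⊕ Fin m) :=
  (Setoid.ker fun t : Fin k ⊕ Fin l ⊕ Fin m =>
      (match t with
        | .inl a => Sum.inl (Quotient.mk q (Sum.inl a))
        | .inr (.inl b) => Sum.inl (Quotient.mk q (Sum.inr b))
        | .inr (.inr c) => Sum.inr c : Quotient q ⊕ Fin m)) ⊔
  (Setoid.ker fun t : Fin k ⊕ Fin l ⊕ Fin m =>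
      (match t with
        | .inl a => Sum.inl a
        | .inr x => Sum.inr (Quotient.mk p x) : Fin k ⊕ Quotient p))

/-- The vertical concatenation `pq` of `p ∈ NC(l,m)` and `q ∈ NC(k,l)`: the restriction
to the outer points of the partition generated by `p` and `q`, after removing the
middle points. -/
def vcomp {k l m : ℕ} (p : Setoid (Fin l ⊕ Fin m)) (q : Setoid (Fin k ⊕ Fin l)) :
    Setoid (Fin k ⊕ Fin m) :=
  Setoid.comap
    (fun s : Fin k ⊕ Fin m =>
      (match s with
        | .inl a => Sum.inl a
        | .inr c => Sum.inr (Sum.inr c) : Fin k ⊕ Fin l ⊕ Fin m))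
    (middleJoin p q)

/-- `b(p,q)`: the number of closed blocks appearing in the vertical concatenation, i.e.
the blocks of the generated partition consisting entirely of middle points. -/
def closedBlocks {k l m : ℕ} (p : Setoid (Fin l ⊕ Fin m)) (q : Setoid (Fin k ⊕ Fin l)) : ℕ :=
  Nat.card {c : Quotient (middleJoin p q) //
    ∀ t : Fin k ⊕ Fin l ⊕ Fin m, Quotient.mk (middleJoin p q) t = c →
      ∃ x : Fin l, t = Sum.inr (Sum.inl x)}


-- ### Auxiliary material

lemma indicator_mul (A B : Prop) :
    (if A then (1:ℂ) else 0) * (if B then 1 else 0) = if A ∧ B then 1 else 0 := by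
  by_cases hA : A <;> by_cases hB : B <;> simp [hA, hB]

lemma hconcat_cond {k l k' l' : ℕ} (p : Setoid (Fin k ⊕ Fin l)) (q : Setoid (Fin k' ⊕ Fin l'))
    (i : Fin k → Fin N) (i' : Fin k' → Fin N) (j : Fin l → Fin N) (j' : Fin l' → Fin N) :
    (∀ a b, (hconcat p q).r a b →
        Sum.elim (Fin.append i i') (Fin.append j j') a = Sum.elim (Fin.append i i') (Fin.append j j') b)
    ↔ ((∀ a b, p.r a b → Sum.elim i j a = Sum.elim i j b) ∧
       (∀ a b, q.r a b → Sum.elim i' j' a = Sum.elim i' j' b)) := by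
  set E := (Equiv.sumCongr (finSumFinEquiv (m := k) (n := k')).symm (finSumFinEquiv (m := l) (n := l')).symm).trans
      (Equiv.sumSumSumComm (Fin k) (Fin k') (Fin l) (Fin l')) with hE
  set M : (Fin k ⊕ Fin l) ⊕ (Fin k' ⊕ Fin l') → Fin N := Sum.elim (Sum.elim i j) (Sum.elim i' j') with hM
  have key : ∀ a, Sum.elim (Fin.append i i') (Fin.append j j') a = M (E a) := by
    rintro (x | x) <;> obtain ⟨y, rfl⟩ := finSumFinEquiv.surjective x <;>
      rcases y with y | y <;>
      simp [hE, hM, Equiv.sumSumSumComm, Fin.append_left, Fin.append_right]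
  have step2 : (∀ a b, (hconcat p q).r a b →
        Sum.elim (Fin.append i i') (Fin.append j j') a = Sum.elim (Fin.append i i') (Fin.append j j') b)
      ↔ (∀ u v, (sumSetoid p q).r u v → M u = M v) := by
    constructor
    · intro h u v huv
      have := h (E.symm u) (E.symm v) (by
        show (sumSetoid p q).r (E (E.symm u)) (E (E.symm v))
        simpa using huv)
      rwa [key, key, E.apply_symm_apply, E.apply_symm_apply] at this
    · intro h a b hab
      rw [key, key]
      exact h _ _ hab
  rw [step2]
  constructor
  · intro h
    constructor
    · intro a b hab
      exact h (Sum.inl a) (Sum.inl b) (congrArg Sum.inl (Quotient.sound hab))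
    · intro a b hab
      exact h (Sum.inr a) (Sum.inr b) (congrArg Sum.inr (Quotient.sound hab))
  · rintro ⟨hp, hq⟩ u v huv
    have h2 : Sum.map (Quotient.mk p) (Quotient.mk q) u = Sum.map (Quotient.mk p) (Quotient.mk q) v := huv
    rcases u with u | u <;> rcases v with v | v <;> simp only [Sum.map_inl, Sum.map_inr,
      Sum.inl.injEq, Sum.inr.injEq, reduceCtorEq] at h2
    · exact hp u v (Quotient.exact h2)
    · exact hq u v (Quotient.exact h2)

lemma reflect_delta {k l : ℕ} (p : Setoid (Fin k ⊕ Fin l)) (a : Fin k → Fin N) (b : Fin l → Fin N) :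
    deltaP N (reflectP p) b a = star (deltaP N p a b) := by
  rw [deltaP, deltaP]
  have key : (∀ x y : Fin l ⊕ Fin k, (reflectP p).r x y → Sum.elim b a x = Sum.elim b a y)
      ↔ (∀ u v : Fin k ⊕ Fin l, p.r u v → Sum.elim a b u = Sum.elim a b v) := by
    constructor
    · intro h u v huv
      have := h (Sum.swap u) (Sum.swap v) (by
        show p.r (Sum.swap (Sum.swap u)) (Sum.swap (Sum.swap v))
        simpa using huv)
      cases u <;> cases v <;> simpa using this
    · intro h x y hxy
      have := h (Sum.swap x) (Sum.swap y) hxy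
      cases x <;> cases y <;> simpa using this
  rw [if_congr key rfl rfl]
  split_ifs <;> simp

def bigLabel {k l m : ℕ} (i : Fin k → Fin N) (f : Fin l → Fin N) (j : Fin m → Fin N) :
    Fin k ⊕ Fin l ⊕ Fin m → Fin N
  | .inl a => i a
  | .inr (.inl b) => f b
  | .inr (.inr c) => j c

def OuterEmb {k l m : ℕ} : Fin k ⊕ Fin m → Fin k ⊕ Fin l ⊕ Fin m :=
  fun s =>
    (match s with
      | .inl a => Sum.inl a
      | .inr c => Sum.inr (Sum.inr c) : Fin k ⊕ Fin l ⊕ Fin m)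

def IsClosedBlock {k l m : ℕ} (p : Setoid (Fin l ⊕ Fin m)) (q : Setoid (Fin k ⊕ Fin l))
    (c : Quotient (middleJoin p q)) : Prop :=
  ∀ t : Fin k ⊕ Fin l ⊕ Fin m, Quotient.mk (middleJoin p q) t = c →
      ∃ x : Fin l, t = Sum.inr (Sum.inl x)

lemma closedBlocks_eq {k l m : ℕ} (p : Setoid (Fin l ⊕ Fin m)) (q : Setoid (Fin k ⊕ Fin l)) :
    closedBlocks p q = Nat.card {c : Quotient (middleJoin p q) // IsClosedBlock p q c} := rfl

def qKer {k l m : ℕ} (q : Setoid (Fin k ⊕ Fin l)) : Fin k ⊕ Fin l ⊕ Fin m → Quotient q ⊕ Fin m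
  | .inl a => Sum.inl (Quotient.mk q (Sum.inl a))
  | .inr (.inl b) => Sum.inl (Quotient.mk q (Sum.inr b))
  | .inr (.inr c) => Sum.inr c

def pKer {k l m : ℕ} (p : Setoid (Fin l ⊕ Fin m)) : Fin k ⊕ Fin l ⊕ Fin m → Fin k ⊕ Quotient p
  | .inl a => Sum.inl a
  | .inr x => Sum.inr (Quotient.mk p x)

lemma middleJoin_def {k l m : ℕ} (p : Setoid (Fin l ⊕ Fin m)) (q : Setoid (Fin k ⊕ Fin l)) :
    middleJoin p q = Setoid.ker (qKer q) ⊔ Setoid.ker (pKer p) := by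
  have h1 : (fun t : Fin k ⊕ Fin l ⊕ Fin m =>
      (match t with
        | .inl a => Sum.inl (Quotient.mk q (Sum.inl a))
        | .inr (.inl b) => Sum.inl (Quotient.mk q (Sum.inr b))
        | .inr (.inr c) => Sum.inr c : Quotient q ⊕ Fin m)) = qKer q := by
    funext t; rcases t with a | b | c <;> rfl
  have h2 : (fun t : Fin k ⊕ Fin l ⊕ Fin m =>
      (match t with
        | .inl a => Sum.inl a
        | .inr x => Sum.inr (Quotient.mk p x) : Fin k ⊕ Quotient p)) = pKer p := by
    funext t; rcases t with a | x <;> rfl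
  rw [middleJoin, h1, h2]

lemma middleJoin_le_ker_iff {k l m : ℕ} (p : Setoid (Fin l ⊕ Fin m)) (q : Setoid (Fin k ⊕ Fin l))
    (i : Fin k → Fin N) (f : Fin l → Fin N) (j : Fin m → Fin N) :
    middleJoin p q ≤ Setoid.ker (bigLabel N i f j) ↔
      ((∀ a b, p.r a b → Sum.elim f j a = Sum.elim f j b) ∧
       (∀ a b, q.r a b → Sum.elim i f a = Sum.elim i f b)) := by
  rw [middleJoin_def, sup_le_iff]
  constructor
  · rintro ⟨h1, h2⟩
    constructor
    · intro a b hab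
      have := @h2 (Sum.inr a) (Sum.inr b) (congrArg Sum.inr (Quotient.sound hab))
      rcases a with a | a <;> rcases b with b | b <;> simpa [bigLabel] using this
    · intro a b hab
      rcases a with a | a <;> rcases b with b | b
      · exact @h1 (Sum.inl a) (Sum.inl b) (congrArg Sum.inl (Quotient.sound hab))
      · exact @h1 (Sum.inl a) (Sum.inr (Sum.inl b)) (congrArg Sum.inl (Quotient.sound hab))
      · exact @h1 (Sum.inr (Sum.inl a)) (Sum.inl b) (congrArg Sum.inl (Quotient.sound hab))
      · exact @h1 (Sum.inr (Sum.inl a)) (Sum.inr (Sum.inl b)) (congrArg Sum.inl (Quotient.sound hab))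
  · rintro ⟨hp, hq⟩
    constructor
    · intro t t' htt
      have h2 : qKer q t = qKer q t' := htt
      rcases t with a | b | c <;> rcases t' with a' | b' | c' <;>
        simp only [qKer, Sum.inl.injEq, Sum.inr.injEq, reduceCtorEq] at h2
      · exact hq _ _ (Quotient.exact h2)
      · exact hq _ _ (Quotient.exact h2)
      · exact hq _ _ (Quotient.exact h2)
      · exact hq _ _ (Quotient.exact h2)
      · exact congrArg j h2
    · intro t t' htt
      have h2 : pKer p t = pKer p t' := htt
      rcases t with a | x <;> rcases t' with a' | x' <;>
        simp only [pKer, Sum.inl.injEq, Sum.inr.injEq, reduceCtorEq] at h2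
      · exact congrArg i h2
      · have := hp _ _ (Quotient.exact h2)
        rcases x with b | c <;> rcases x' with b' | c' <;> simpa [bigLabel] using this

lemma bigLabel_outer {k l m : ℕ} (i : Fin k → Fin N) (f : Fin l → Fin N) (j : Fin m → Fin N)
    (s : Fin k ⊕ Fin m) : bigLabel N i f j (OuterEmb s) = Sum.elim i j s := by
  rcases s with a | c <;> rfl

lemma exists_outer {k l m : ℕ} {p : Setoid (Fin l ⊕ Fin m)} {q : Setoid (Fin k ⊕ Fin l)}
    (c : Quotient (middleJoin p q)) (h : ¬ IsClosedBlock p q c) :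
    ∃ s : Fin k ⊕ Fin m, Quotient.mk (middleJoin p q) (OuterEmb s) = c := by
  rw [IsClosedBlock] at h
  push_neg at h
  obtain ⟨t, ht, hmid⟩ := h
  rcases t with a | b | c'
  · exact ⟨Sum.inl a, ht⟩
  · exact absurd rfl (hmid b)
  · exact ⟨Sum.inr c', ht⟩

lemma not_closed_outer {k l m : ℕ} {p : Setoid (Fin l ⊕ Fin m)} {q : Setoid (Fin k ⊕ Fin l)}
    (s : Fin k ⊕ Fin m) : ¬ IsClosedBlock p q (Quotient.mk (middleJoin p q) (OuterEmb s)) := by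
  intro h
  obtain ⟨x, hx⟩ := h (OuterEmb s) rfl
  rcases s with a | c <;> simp [OuterEmb] at hx

/-- forced extension of a labelling of the closed blocks -/
noncomputable def forceF {k l m : ℕ} (p : Setoid (Fin l ⊕ Fin m)) (q : Setoid (Fin k ⊕ Fin l))
    (i : Fin k → Fin N) (j : Fin m → Fin N)
    (g : {c : Quotient (middleJoin p q) // IsClosedBlock p q c} → Fin N) :
    Quotient (middleJoin p q) → Fin N :=
  fun c => if h : IsClosedBlock p q c then g ⟨c, h⟩ else Sum.elim i j (exists_outer c h).choose

lemma card_middle {k l m : ℕ} (p : Setoid (Fin l ⊕ Fin m)) (q : Setoid (Fin k ⊕ Fin l))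
    (i : Fin k → Fin N) (j : Fin m → Fin N) :
    Nat.card {f : Fin l → Fin N // middleJoin p q ≤ Setoid.ker (bigLabel N i f j)} =
      (if (∀ a b : Fin k ⊕ Fin m, (vcomp p q).r a b → Sum.elim i j a = Sum.elim i j b)
        then N ^ closedBlocks p q else 0) := by
  split_ifs with hD
  · have hforce : ∀ (g : {c : Quotient (middleJoin p q) // IsClosedBlock p q c} → Fin N)
        (s : Fin k ⊕ Fin m),
        forceF N p q i j g (Quotient.mk (middleJoin p q) (OuterEmb s)) = Sum.elim i j s := by
      intro g s
      rw [forceF, dif_neg (not_closed_outer s)]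
      have h0 := (exists_outer (Quotient.mk (middleJoin p q) (OuterEmb s))
        (not_closed_outer s)).choose_spec
      have h1 : (middleJoin p q).r
          (OuterEmb (exists_outer (Quotient.mk (middleJoin p q) (OuterEmb s))
            (not_closed_outer s)).choose) (OuterEmb s) := Quotient.exact h0
      exact hD _ _ h1
    have hbig : ∀ (g : {c : Quotient (middleJoin p q) // IsClosedBlock p q c} → Fin N)
        (t : Fin k ⊕ Fin l ⊕ Fin m),
        bigLabel N i (fun b => forceF N p q i j g (Quotient.mk (middleJoin p q) (Sum.inr (Sum.inl b)))) j t
          = forceF N p q i j g (Quotient.mk (middleJoin p q) t) := by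
      intro g t
      rcases t with a | b | c
      · exact (hforce g (Sum.inl a)).symm
      · rfl
      · exact (hforce g (Sum.inr c)).symm
    have hGmem : ∀ g : {c : Quotient (middleJoin p q) // IsClosedBlock p q c} → Fin N,
        middleJoin p q ≤ Setoid.ker (bigLabel N i
          (fun b => forceF N p q i j g (Quotient.mk (middleJoin p q) (Sum.inr (Sum.inl b)))) j) := by
      intro g t t' htt
      show bigLabel N i _ j t = bigLabel N i _ j t'
      rw [hbig g t, hbig g t', Quotient.sound htt]
    have hbij : Function.Bijective
        (fun (fh : {f : Fin l → Fin N // middleJoin p q ≤ Setoid.ker (bigLabel N i f j)})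
            (c : {c : Quotient (middleJoin p q) // IsClosedBlock p q c}) =>
          Quotient.lift (bigLabel N i fh.1 j) (fun t t' h => fh.2 h) c.1) := by
      constructor
      · rintro ⟨f, hf⟩ ⟨f', hf'⟩ hT
        apply Subtype.ext
        funext b
        by_cases hc : IsClosedBlock p q (Quotient.mk (middleJoin p q) (Sum.inr (Sum.inl b)))
        · have := congrFun hT ⟨Quotient.mk (middleJoin p q) (Sum.inr (Sum.inl b)), hc⟩
          exact this
        · obtain ⟨s, hs⟩ := exists_outer _ hc
          have r1 : (middleJoin p q).r (OuterEmb s) (Sum.inr (Sum.inl b)) := Quotient.exact hs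
          have e1 : Sum.elim i j s = f b := by
            have h3 : bigLabel N i f j (OuterEmb s) = bigLabel N i f j (Sum.inr (Sum.inl b)) := hf r1
            rwa [bigLabel_outer] at h3
          have e2 : Sum.elim i j s = f' b := by
            have h3 : bigLabel N i f' j (OuterEmb s) = bigLabel N i f' j (Sum.inr (Sum.inl b)) := hf' r1
            rwa [bigLabel_outer] at h3
          exact e1.symm.trans e2
      · intro g
        refine ⟨⟨_, hGmem g⟩, ?_⟩
        funext c
        obtain ⟨c0, hc⟩ := c
        obtain ⟨t, rfl⟩ := Quotient.exists_rep c0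
        show Quotient.lift _ _ (Quotient.mk (middleJoin p q) t) = _
        rw [Quotient.lift_mk]
        rw [hbig g t, forceF, dif_pos hc]
    rw [Nat.card_eq_of_bijective _ hbij, Nat.card_fun, Nat.card_eq_fintype_card (α := Fin N),
      Fintype.card_fin, closedBlocks_eq]
  · rw [Nat.card_eq_zero]
    left
    constructor
    rintro ⟨f, hf⟩
    push_neg at hD
    obtain ⟨a, b, hab, hne⟩ := hD
    have h1 : bigLabel N i f j (OuterEmb a) = bigLabel N i f j (OuterEmb b) := hf hab
    rw [bigLabel_outer, bigLabel_outer] at h1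
    exact hne h1

/-- Proposition 2.8: for non-crossing partitions `p, q`:
(i) `T_{p⊗q} = T_p ⊗ T_q` (entrywise, via concatenation of multi-indices);
(ii) `T_{p^*} = (T_p)^*`;
(iii) `T_{pq} = N^{−b(p,q)} T_p T_q`. -/
theorem maps_of_partitions (hN : 1 ≤ N) :
    (∀ (k l k' l' : ℕ) (p : Setoid (Fin k ⊕ Fin l)) (q : Setoid (Fin k' ⊕ Fin l')),
      NonCrossing k l p → NonCrossing k' l' q →
      ∀ (i : Fin k → Fin N) (i' : Fin k' → Fin N) (j : Fin l → Fin N) (j' : Fin l' → Fin N),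
        matrixOfP N (hconcat p q) (Fin.append j j') (Fin.append i i') =
          matrixOfP N p j i * matrixOfP N q j' i') ∧
    (∀ (k l : ℕ) (p : Setoid (Fin k ⊕ Fin l)), NonCrossing k l p →
      matrixOfP N (reflectP p) = (matrixOfP N p)ᴴ) ∧
    (∀ (k l m : ℕ) (p : Setoid (Fin l ⊕ Fin m)) (q : Setoid (Fin k ⊕ Fin l)),
      NonCrossing l m p → NonCrossing k l q →
      matrixOfP N (vcomp p q) =
        (((N : ℂ) ^ closedBlocks p q)⁻¹) • (matrixOfP N p * matrixOfP N q)) := by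
  have hN0 : (N : ℂ) ≠ 0 := by
    simp only [ne_eq, Nat.cast_eq_zero]
    omega
  refine ⟨?_, ?_, ?_⟩
  · intro k l k' l' p q _ _ i i' j j'
    show deltaP N (hconcat p q) (Fin.append i i') (Fin.append j j')
      = deltaP N p i j * deltaP N q i' j'
    rw [deltaP, deltaP, deltaP, if_congr (hconcat_cond N p q i i' j j') rfl rfl]
    by_cases hA : (∀ a b : Fin k ⊕ Fin l, p.r a b → Sum.elim i j a = Sum.elim i j b) <;>
      by_cases hB : (∀ a b : Fin k' ⊕ Fin l', q.r a b → Sum.elim i' j' a = Sum.elim i' j' b)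
    · rw [if_pos hA, if_pos hB, if_pos ⟨hA, hB⟩, one_mul]
    · rw [if_neg hB, if_neg (fun h => hB h.2), mul_zero]
    · rw [if_neg hA, if_neg (fun h => hA h.1), zero_mul]
    · rw [if_neg hA, if_neg (fun h => hA h.1), zero_mul]
  · intro k l p _
    ext a b
    rw [Matrix.conjTranspose_apply]
    exact reflect_delta N p a b
  · intro k l m p q _ _
    ext x y
    show deltaP N (vcomp p q) y x = _
    rw [Matrix.smul_apply, Matrix.mul_apply, smul_eq_mul]
    have hterm : ∀ f : Fin l → Fin N,
        matrixOfP N p x f * matrixOfP N q f y =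
          if middleJoin p q ≤ Setoid.ker (bigLabel N y f x) then (1:ℂ) else 0 := by
      intro f
      show deltaP N p f x * deltaP N q y f = _
      rw [deltaP, deltaP, if_congr (middleJoin_le_ker_iff N p q y f x) rfl rfl]
      by_cases hA : (∀ a b : Fin l ⊕ Fin m, p.r a b → Sum.elim f x a = Sum.elim f x b) <;>
        by_cases hB : (∀ a b : Fin k ⊕ Fin l, q.r a b → Sum.elim y f a = Sum.elim y f b)
      · rw [if_pos hA, if_pos hB, if_pos ⟨hA, hB⟩, one_mul]
      · rw [if_neg hB, mul_zero, if_neg]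
        exact fun h => hB h.2
      · rw [if_neg hA, zero_mul, if_neg]
        exact fun h => hA h.1
      · rw [if_neg hA, zero_mul, if_neg]
        exact fun h => hA h.1
    rw [Finset.sum_congr rfl (fun f _ => hterm f), Finset.sum_boole]
    have hcard : (Finset.univ.filter
          (fun f : Fin l → Fin N => middleJoin p q ≤ Setoid.ker (bigLabel N y f x))).card
        = (if (∀ a b : Fin k ⊕ Fin m, (vcomp p q).r a b → Sum.elim y x a = Sum.elim y x b)
            then N ^ closedBlocks p q else 0) := by
      rw [← card_middle N p q y x, Nat.card_eq_fintype_card, Fintype.card_subtype]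
    rw [hcard, deltaP]
    have hpow : ((N : ℂ)) ^ closedBlocks p q ≠ 0 := pow_ne_zero _ hN0
    split_ifs
    · push_cast
      rw [inv_mul_cancel₀ hpow]
    · simp


end
end
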